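/- Fix positive integers n, α, β, γ and constant coefficients a(m,i,j) ∈ ℂ (m ≤ α, i ≤ β, j ≤ n) and b(m,i,j) ∈ ℂ (m ≤ γ, i ≤ α, j ≤ n). Assume: (H1) ker ℬ = range 𝒜¹ (exactness of S^β_2 → S^α_1 → S^γ_0); (H2) dim A¹ = dim A⁰ + Σ_{r=1}^{n−1} dim A⁰_r; (H2') dim A² = dim A¹ + Σ_{r=1}^{n−1} dim A¹_r. Then the tableau associated to B is in involution: dim B¹ = dim B⁰ + Σ_{r=1}^{n−1} dim B⁰_r. -/
import Mathlib


noncomputable section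

/-- The linear map induced on 1-jets by a first-order constant-coefficient operator:
`(op1 a P) m = Σ_{i,j} a m i j · P i j`. -/
def op1 (n α β : ℕ) (a : Fin α → Fin β → Fin n → ℂ) :
    (Fin β → Fin n → ℂ) →ₗ[ℂ] (Fin α → ℂ) where
  toFun P := fun m => ∑ i, ∑ j, a m i j * P i j
  map_add' P Q := by
    funext m
    simp only [Pi.add_apply]
    rw [← Finset.sum_add_distrib]
    refine Finset.sum_congr rfl fun i _ => ?_
    rw [← Finset.sum_add_distrib]
    exact Finset.sum_congr rfl fun j _ => by ring
  map_smul' c P := by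
    funext m
    simp only [Pi.smul_apply, smul_eq_mul, RingHom.id_apply]
    rw [Finset.mul_sum]
    refine Finset.sum_congr rfl fun i _ => ?_
    rw [Finset.mul_sum]
    exact Finset.sum_congr rfl fun j _ => by ring

/-- The prolonged linear map on 2-jets: `(op2 a P) m l = Σ_{i,j} a m i j · P i l j`. -/
def op2 (n α β : ℕ) (a : Fin α → Fin β → Fin n → ℂ) :
    (Fin β → Fin n → Fin n → ℂ) →ₗ[ℂ] (Fin α → Fin n → ℂ) where
  toFun P := fun m l => ∑ i, ∑ j, a m i j * P i l j
  map_add' P Q := by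
    funext m l
    simp only [Pi.add_apply]
    rw [← Finset.sum_add_distrib]
    refine Finset.sum_congr rfl fun i _ => ?_
    rw [← Finset.sum_add_distrib]
    exact Finset.sum_congr rfl fun j _ => by ring
  map_smul' c P := by
    funext m l
    simp only [Pi.smul_apply, smul_eq_mul, RingHom.id_apply]
    rw [Finset.mul_sum]
    refine Finset.sum_congr rfl fun i _ => ?_
    rw [Finset.mul_sum]
    exact Finset.sum_congr rfl fun j _ => by ring

/-- The twice-prolonged linear map on 3-jets:
`(op3 a P) m l l' = Σ_{i,j} a m i j · P i l l' j`. -/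
def op3 (n α β : ℕ) (a : Fin α → Fin β → Fin n → ℂ) :
    (Fin β → Fin n → Fin n → Fin n → ℂ) →ₗ[ℂ] (Fin α → Fin n → Fin n → ℂ) where
  toFun P := fun m l l' => ∑ i, ∑ j, a m i j * P i l l' j
  map_add' P Q := by
    funext m l l'
    simp only [Pi.add_apply]
    rw [← Finset.sum_add_distrib]
    refine Finset.sum_congr rfl fun i _ => ?_
    rw [← Finset.sum_add_distrib]
    exact Finset.sum_congr rfl fun j _ => by ring
  map_smul' c P := by
    funext m l l'
    simp only [Pi.smul_apply, smul_eq_mul, RingHom.id_apply]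
    rw [Finset.mul_sum]
    refine Finset.sum_congr rfl fun i _ => ?_
    rw [Finset.mul_sum]
    exact Finset.sum_congr rfl fun j _ => by ring

/-- `S^β_2`: the space of `β`-vector-valued homogeneous 2-jets in `n` variables, i.e.
families `P i j k` symmetric in the two lower indices `j, k`. -/
def Sym2Sub (n β : ℕ) : Submodule ℂ (Fin β → Fin n → Fin n → ℂ) where
  carrier := {P | ∀ i j k, P i j k = P i k j}
  add_mem' := by
    intro P Q hP hQ i j k
    simp only [Pi.add_apply, hP i j k, hQ i j k]
  zero_mem' := by intro i j k; rfl
  smul_mem' := by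
    intro c P hP i j k
    simp only [Pi.smul_apply, hP i j k]

/-- `S^β_3`: the space of `β`-vector-valued homogeneous 3-jets in `n` variables, i.e.
families `P i j k l` symmetric under all permutations of the lower indices `j, k, l`. -/
def Sym3Sub (n β : ℕ) : Submodule ℂ (Fin β → Fin n → Fin n → Fin n → ℂ) where
  carrier := {P | (∀ i j k l, P i j k l = P i k j l) ∧ (∀ i j k l, P i j k l = P i j l k) ∧
    (∀ i j k l, P i j k l = P i l k j)}
  add_mem' := by
    rintro P Q ⟨hP1, hP2, hP3⟩ ⟨hQ1, hQ2, hQ3⟩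
    exact ⟨fun i j k l => by simp only [Pi.add_apply, hP1 i j k l, hQ1 i j k l],
      fun i j k l => by simp only [Pi.add_apply, hP2 i j k l, hQ2 i j k l],
      fun i j k l => by simp only [Pi.add_apply, hP3 i j k l, hQ3 i j k l]⟩
  zero_mem' := ⟨fun _ _ _ _ => rfl, fun _ _ _ _ => rfl, fun _ _ _ _ => rfl⟩
  smul_mem' := by
    rintro c P ⟨hP1, hP2, hP3⟩
    exact ⟨fun i j k l => by simp only [Pi.smul_apply, hP1 i j k l],
      fun i j k l => by simp only [Pi.smul_apply, hP2 i j k l],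
      fun i j k l => by simp only [Pi.smul_apply, hP3 i j k l]⟩

/-- The subspace of 1-jets `P i j` vanishing whenever the lower index `j` is one of the
first `r` variables (`j.1 < r` in zero-indexed notation, i.e. `j ≤ r` one-indexed). -/
def Van1 (n β : ℕ) (r : ℕ) : Submodule ℂ (Fin β → Fin n → ℂ) where
  carrier := {P | ∀ i j, j.1 < r → P i j = 0}
  add_mem' := by
    intro P Q hP hQ i j hj
    simp only [Pi.add_apply, hP i j hj, hQ i j hj, add_zero]
  zero_mem' := by intro i j hj; rfl
  smul_mem' := by
    intro c P hP i j hj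
    simp only [Pi.smul_apply, hP i j hj, smul_zero]

/-- The subspace of 2-jets `P i j k` vanishing whenever some lower index is one of the
first `r` variables. -/
def Van2 (n β : ℕ) (r : ℕ) : Submodule ℂ (Fin β → Fin n → Fin n → ℂ) where
  carrier := {P | ∀ i j k, j.1 < r ∨ k.1 < r → P i j k = 0}
  add_mem' := by
    intro P Q hP hQ i j k hjk
    simp only [Pi.add_apply, hP i j k hjk, hQ i j k hjk, add_zero]
  zero_mem' := by intro i j k hjk; rfl
  smul_mem' := by
    intro c P hP i j k hjk
    simp only [Pi.smul_apply, hP i j k hjk, smul_zero]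


open Module


section Abstract
variable {M N : Type*} [AddCommGroup M] [Module ℂ M] [AddCommGroup N] [Module ℂ N]

lemma rank_split [FiniteDimensional ℂ M] (p : Submodule ℂ M) (f : M →ₗ[ℂ] N) :
    finrank ℂ p = finrank ℂ (p.map f) + finrank ℂ ↥(p ⊓ LinearMap.ker f) := by
  have h := LinearMap.finrank_range_add_finrank_ker (f.domRestrict p)
  rw [LinearMap.range_domRestrict, LinearMap.ker_domRestrict] at h
  have e : Submodule.comap p.subtype (LinearMap.ker f)
      = Submodule.comap p.subtype (p ⊓ LinearMap.ker f) := by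
    ext x; simp [x.2]
  rw [e, LinearEquiv.finrank_eq
    (Submodule.comapSubtypeEquivOfLe (inf_le_left : p ⊓ LinearMap.ker f ≤ p))] at h
  omega

lemma filt_chain [FiniteDimensional ℂ M] :
    ∀ (m : ℕ) (K : ℕ → Submodule ℂ M) (f : ℕ → (M →ₗ[ℂ] N)),
    (∀ s < m, ∀ x ∈ K s, (f s x = 0 ↔ x ∈ K (s+1))) → (∀ s < m, K (s+1) ≤ K s) →
    K m = ⊥ →
    finrank ℂ (K 0) = ∑ s ∈ Finset.range m, finrank ℂ ((K s).map (f s)) := by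
  intro m
  induction m with
  | zero => intro K f _ _ hbot; rw [hbot]; simp
  | succ m ih =>
    intro K f hker hmono hbot
    have e : K 0 ⊓ LinearMap.ker (f 0) = K 1 := by
      apply le_antisymm
      · intro x hx
        obtain ⟨h1, h2⟩ := Submodule.mem_inf.mp hx
        exact (hker 0 (Nat.succ_pos m) x h1).1 (LinearMap.mem_ker.mp h2)
      · intro x hx
        have hx0 := hmono 0 (Nat.succ_pos m) hx
        exact Submodule.mem_inf.mpr ⟨hx0, LinearMap.mem_ker.mpr ((hker 0 (Nat.succ_pos m) x hx0).2 hx)⟩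
    have h0 := rank_split (K 0) (f 0)
    rw [e] at h0
    have h1 : finrank ℂ ↥(K 1) = ∑ s ∈ Finset.range m, finrank ℂ ↥((K (s+1)).map (f (s+1))) :=
      ih (fun s => K (s+1)) (fun s => f (s+1))
      (fun s hs => hker (s+1) (by omega)) (fun s hs => hmono (s+1) (by omega)) hbot
    rw [Finset.sum_range_succ' (fun s => finrank ℂ ((K s).map (f s))) m]
    omega

lemma filt_main [FiniteDimensional ℂ M] [FiniteDimensional ℂ N] (m : ℕ)
    (K : ℕ → Submodule ℂ M) (W : ℕ → Submodule ℂ N) (f : ℕ → (M →ₗ[ℂ] N))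
    (hker : ∀ s < m, ∀ x ∈ K s, (f s x = 0 ↔ x ∈ K (s+1)))
    (hmono : ∀ s < m, K (s+1) ≤ K s)
    (hbot : K m = ⊥)
    (hmap : ∀ s < m, (K s).map (f s) ≤ W s) :
    (finrank ℂ (K 0) = ∑ s ∈ Finset.range m, finrank ℂ (W s) →
       ∀ s < m, (K s).map (f s) = W s) ∧
    ((∀ s < m, (K s).map (f s) = W s) →
       finrank ℂ (K 0) = ∑ s ∈ Finset.range m, finrank ℂ (W s)) := by
  have hch := filt_chain m K f hker hmono hbot
  constructor
  · intro heq
    by_contra hc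
    push_neg at hc
    obtain ⟨s, hs, hne⟩ := hc
    have hlt : ∀ t ∈ Finset.range m, finrank ℂ ((K t).map (f t)) ≤ finrank ℂ (W t) :=
      fun t ht => Submodule.finrank_mono (hmap t (Finset.mem_range.mp ht))
    have hstrict : finrank ℂ ((K s).map (f s)) < finrank ℂ (W s) :=
      Submodule.finrank_lt_finrank_of_lt (lt_of_le_of_ne (hmap s hs) hne)
    have := Finset.sum_lt_sum hlt ⟨s, Finset.mem_range.mpr hs, hstrict⟩
    omega
  · intro hsurj
    rw [hch]
    exact Finset.sum_congr rfl fun s hs => by rw [hsurj s (Finset.mem_range.mp hs)]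

end Abstract

/-- 3-jets vanishing when some lower index is < r. -/
def Van3 (n β : ℕ) (r : ℕ) : Submodule ℂ (Fin β → Fin n → Fin n → Fin n → ℂ) where
  carrier := {P | ∀ i j k l, j.1 < r ∨ k.1 < r ∨ l.1 < r → P i j k l = 0}
  add_mem' := by
    intro P Q hP hQ i j k l h
    simp only [Pi.add_apply, hP i j k l h, hQ i j k l h, add_zero]
  zero_mem' := by intro i j k l h; rfl
  smul_mem' := by
    intro c P hP i j k l h
    simp only [Pi.smul_apply, hP i j k l h, smul_zero]

lemma mem_Van1 {n q r : ℕ} {P : Fin q → Fin n → ℂ} :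
    P ∈ Van1 n q r ↔ ∀ i j, j.1 < r → P i j = 0 := Iff.rfl
lemma mem_Van2 {n q r : ℕ} {P : Fin q → Fin n → Fin n → ℂ} :
    P ∈ Van2 n q r ↔ ∀ i j k, j.1 < r ∨ k.1 < r → P i j k = 0 := Iff.rfl
lemma mem_Van3 {n q r : ℕ} {P : Fin q → Fin n → Fin n → Fin n → ℂ} :
    P ∈ Van3 n q r ↔ ∀ i j k l, j.1 < r ∨ k.1 < r ∨ l.1 < r → P i j k l = 0 := Iff.rfl
lemma mem_Sym2 {n q : ℕ} {P : Fin q → Fin n → Fin n → ℂ} :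
    P ∈ Sym2Sub n q ↔ ∀ i j k, P i j k = P i k j := Iff.rfl
lemma mem_Sym3 {n q : ℕ} {P : Fin q → Fin n → Fin n → Fin n → ℂ} :
    P ∈ Sym3Sub n q ↔ (∀ i j k l, P i j k l = P i k j l) ∧ (∀ i j k l, P i j k l = P i j l k) ∧
      (∀ i j k l, P i j k l = P i l k j) := Iff.rfl

lemma op1_apply {n p q : ℕ} (c : Fin p → Fin q → Fin n → ℂ) (P) (m) :
    op1 n p q c P m = ∑ i, ∑ j, c m i j * P i j := rfl
lemma op2_apply {n p q : ℕ} (c : Fin p → Fin q → Fin n → ℂ) (P) (m) (l) :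
    op2 n p q c P m l = ∑ i, ∑ j, c m i j * P i l j := rfl
lemma op3_apply {n p q : ℕ} (c : Fin p → Fin q → Fin n → ℂ) (P) (m) (l) (l') :
    op3 n p q c P m l l' = ∑ i, ∑ j, c m i j * P i l l' j := rfl

lemma Van1_zero (n q : ℕ) : Van1 n q 0 = ⊤ := by
  rw [eq_top_iff]; intro P _; exact fun i j hj => absurd hj (Nat.not_lt_zero _)
lemma Van2_zero (n q : ℕ) : Van2 n q 0 = ⊤ := by
  rw [eq_top_iff]; intro P _; exact fun i j k h => absurd h (by omega)
lemma Van3_zero (n q : ℕ) : Van3 n q 0 = ⊤ := by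
  rw [eq_top_iff]; intro P _; exact fun i j k l h => absurd h (by omega)

lemma sum_split {n : ℕ} (hn : 0 < n) (g : ℕ → ℕ) :
    ∑ s ∈ Finset.range n, g s = g 0 + ∑ r ∈ Finset.Icc 1 (n-1), g r := by
  have h : Finset.range n = insert 0 (Finset.Icc 1 (n-1)) := by
    ext x; simp only [Finset.mem_range, Finset.mem_insert, Finset.mem_Icc]; omega
  rw [h, Finset.sum_insert (by simp)]

/-- slice of a 2-jet at lower index `s`. -/
def slice2 (n q : ℕ) (s : ℕ) : (Fin q → Fin n → Fin n → ℂ) →ₗ[ℂ] (Fin q → Fin n → ℂ) :=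
  if h : s < n then
    { toFun := fun P i j => P i ⟨s, h⟩ j
      map_add' := fun _ _ => rfl
      map_smul' := fun _ _ => rfl }
  else 0

lemma slice2_apply {n q s : ℕ} (h : s < n) (P : Fin q → Fin n → Fin n → ℂ) :
    slice2 n q s P = fun i j => P i ⟨s, h⟩ j := by
  rw [slice2, dif_pos h]; rfl

/-- slice of a 3-jet at first lower index `s`. -/
def slice3 (n q : ℕ) (s : ℕ) :
    (Fin q → Fin n → Fin n → Fin n → ℂ) →ₗ[ℂ] (Fin q → Fin n → Fin n → ℂ) :=
  if h : s < n then
    { toFun := fun P i j k => P i ⟨s, h⟩ j k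
      map_add' := fun _ _ => rfl
      map_smul' := fun _ _ => rfl }
  else 0

lemma slice3_apply {n q s : ℕ} (h : s < n) (P : Fin q → Fin n → Fin n → Fin n → ℂ) :
    slice3 n q s P = fun i j k => P i ⟨s, h⟩ j k := by
  rw [slice3, dif_pos h]; rfl

/-- Cartan's test with equality forces surjectivity of all slice maps of the tableau. -/
lemma surjA (n p q : ℕ) (hn : 0 < n) (c : Fin p → Fin q → Fin n → ℂ)
    (heq : finrank ℂ ↥(Sym2Sub n q ⊓ LinearMap.ker (op2 n p q c)) =
      finrank ℂ ↥(LinearMap.ker (op1 n p q c)) +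
        ∑ r ∈ Finset.Icc 1 (n - 1),
          finrank ℂ ↥(LinearMap.ker (op1 n p q c) ⊓ Van1 n q r)) :
    ∀ s < n, ∀ Q ∈ LinearMap.ker (op1 n p q c) ⊓ Van1 n q s,
      ∃ P ∈ (Sym2Sub n q ⊓ LinearMap.ker (op2 n p q c)) ⊓ Van2 n q s,
        slice2 n q s P = Q := by
  set A1 := Sym2Sub n q ⊓ LinearMap.ker (op2 n p q c) with hA1
  set K : ℕ → Submodule ℂ (Fin q → Fin n → Fin n → ℂ) := fun s => A1 ⊓ Van2 n q s with hK
  set W : ℕ → Submodule ℂ (Fin q → Fin n → ℂ) :=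
    fun s => LinearMap.ker (op1 n p q c) ⊓ Van1 n q s with hW
  have hunfold : ∀ s, ∀ x, x ∈ K s ↔ x ∈ A1 ∧ x ∈ Van2 n q s := fun s x => Submodule.mem_inf
  have hker : ∀ s < n, ∀ x ∈ K s, (slice2 n q s x = 0 ↔ x ∈ K (s+1)) := by
    intro s hs x hx
    obtain ⟨hxA, hxV⟩ := (hunfold s x).mp hx
    obtain ⟨hsym, -⟩ := Submodule.mem_inf.mp hxA
    rw [slice2_apply hs]
    constructor
    · intro h0
      refine (hunfold _ x).mpr ⟨hxA, fun i j k hjk => ?_⟩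
      rcases hjk with hj | hk
      · rcases Nat.lt_succ_iff_lt_or_eq.mp hj with hj | hj
        · exact hxV i j k (Or.inl hj)
        · have : j = ⟨s, hs⟩ := Fin.ext hj
          subst this
          exact congrFun (congrFun h0 i) k
      · rcases Nat.lt_succ_iff_lt_or_eq.mp hk with hk | hk
        · exact hxV i j k (Or.inr hk)
        · have : k = ⟨s, hs⟩ := Fin.ext hk
          subst this
          rw [hsym i j ⟨s, hs⟩]
          exact congrFun (congrFun h0 i) j
    · intro h
      obtain ⟨-, hV⟩ := (hunfold _ x).mp h
      funext i j
      exact hV i ⟨s, hs⟩ j (Or.inl (Nat.lt_succ_self s))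
  have hmono : ∀ s < n, K (s+1) ≤ K s := by
    intro s _ x hx
    obtain ⟨hxA, hxV⟩ := (hunfold _ x).mp hx
    exact (hunfold _ x).mpr ⟨hxA, fun i j k h => hxV i j k (by omega)⟩
  have hbot : K n = ⊥ := by
    rw [eq_bot_iff]
    intro x hx
    obtain ⟨-, hxV⟩ := (hunfold _ x).mp hx
    have : x = 0 := funext fun i => funext fun j => funext fun k => hxV i j k (Or.inl j.2)
    simp [this]
  have hmap : ∀ s < n, (K s).map (slice2 n q s) ≤ W s := by
    intro s hs y hy
    obtain ⟨x, hx, rfl⟩ := Submodule.mem_map.mp hy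
    obtain ⟨hxA, hxV⟩ := (hunfold s x).mp hx
    obtain ⟨-, hxker⟩ := Submodule.mem_inf.mp hxA
    rw [slice2_apply hs]
    refine Submodule.mem_inf.mpr ⟨?_, fun i j hj => hxV i ⟨s, hs⟩ j (Or.inr hj)⟩
    rw [LinearMap.mem_ker]
    funext m
    have := congrFun (congrFun (LinearMap.mem_ker.mp hxker) m) ⟨s, hs⟩
    rw [op2_apply] at this
    rw [op1_apply]
    exact this
  have hfm := filt_main n K W (fun s => slice2 n q s) hker hmono hbot hmap
  have hk0 : K 0 = A1 := by rw [hK]; simp [Van2_zero]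
  have hw0 : W 0 = LinearMap.ker (op1 n p q c) := by rw [hW]; simp [Van1_zero]
  have hsum : finrank ℂ ↥(K 0) = ∑ s ∈ Finset.range n, finrank ℂ ↥(W s) := by
    rw [hk0, sum_split hn (fun s => finrank ℂ ↥(W s)), hw0]
    exact heq
  intro s hs Q hQ
  have hWs := (hfm.1 hsum) s hs
  have hQ' : Q ∈ W s := hQ
  rw [← hWs] at hQ'
  obtain ⟨P, hP, hPQ⟩ := Submodule.mem_map.mp hQ'
  exact ⟨P, hP, hPQ⟩

/-- symmetrized extension of a 2-jet `T` (vanishing below level `s`) to a 3-jet with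
slice `T` at level `s`. -/
def ext3 (n q s : ℕ) (T : Fin q → Fin n → Fin n → ℂ) : Fin q → Fin n → Fin n → Fin n → ℂ :=
  fun i j k l =>
    if j.1 = s then T i k l else if k.1 = s then T i j l else if l.1 = s then T i j k else 0

section ext3lemmas
variable {n q s : ℕ} {T : Fin q → Fin n → Fin n → ℂ}

lemma ext3_j (hsym : ∀ i j k, T i j k = T i k j) (i : Fin q) (j k l : Fin n) (h : j.1 = s) :
    ext3 n q s T i j k l = T i k l := by simp [ext3, h]
lemma ext3_k (i : Fin q) (j k l : Fin n) (h : j.1 ≠ s) (h' : k.1 = s) :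
    ext3 n q s T i j k l = T i j l := by simp [ext3, h, h']
lemma ext3_l (i : Fin q) (j k l : Fin n) (h : j.1 ≠ s) (h' : k.1 ≠ s) (h'' : l.1 = s) :
    ext3 n q s T i j k l = T i j k := by simp [ext3, h, h', h'']
lemma ext3_0 (i : Fin q) (j k l : Fin n) (h : j.1 ≠ s) (h' : k.1 ≠ s) (h'' : l.1 ≠ s) :
    ext3 n q s T i j k l = 0 := by simp [ext3, h, h', h'']

lemma ext3_mem_sym3 (hsym : ∀ i j k, T i j k = T i k j) : ext3 n q s T ∈ Sym3Sub n q := by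
  have hj := ext3_j (T := T) (n := n) (q := q) (s := s) hsym
  refine mem_Sym3.mpr ⟨?_, ?_, ?_⟩ <;> intro i j k l
  · by_cases h1 : j.1 = s <;> by_cases h2 : k.1 = s
    · have e : j = k := Fin.ext (by omega)
      rw [e]
    · rw [hj i j k l h1, ext3_k i k j l h2 h1]
    · rw [ext3_k i j k l h1 h2, hj i k j l h2]
    · by_cases h3 : l.1 = s
      · rw [ext3_l i j k l h1 h2 h3, ext3_l i k j l h2 h1 h3]
        exact hsym i j k
      · rw [ext3_0 i j k l h1 h2 h3, ext3_0 i k j l h2 h1 h3]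
  · by_cases h1 : j.1 = s
    · rw [hj i j k l h1, hj i j l k h1]
      exact hsym i k l
    · by_cases h2 : k.1 = s <;> by_cases h3 : l.1 = s
      · have e : k = l := Fin.ext (by omega)
        rw [e]
      · rw [ext3_k i j k l h1 h2, ext3_l i j l k h1 h3 h2]
      · rw [ext3_l i j k l h1 h2 h3, ext3_k i j l k h1 h3]
      · rw [ext3_0 i j k l h1 h2 h3, ext3_0 i j l k h1 h3 h2]
  · by_cases h1 : j.1 = s <;> by_cases h3 : l.1 = s
    · have e : j = l := Fin.ext (by omega)
      rw [e]
    · by_cases h2 : k.1 = s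
      · have e : k = j := Fin.ext (by omega)
        rw [hj i j k l h1, ext3_k i l k j h3 h2, e]
        exact hsym i j l
      · rw [hj i j k l h1, ext3_l i l k j h3 h2 h1]
        exact hsym i k l
    · by_cases h2 : k.1 = s
      · have e : k = l := Fin.ext (by omega)
        rw [ext3_k i j k l h1 h2, hj i l k j h3, e]
        exact hsym i j l
      · rw [ext3_l i j k l h1 h2 h3, hj i l k j h3]
        exact hsym i j k
    · by_cases h2 : k.1 = s
      · rw [ext3_k i j k l h1 h2, ext3_k i l k j h3 h2]
        exact hsym i j l
      · rw [ext3_0 i j k l h1 h2 h3, ext3_0 i l k j h3 h2 h1]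

lemma ext3_mem_van3 (hV : T ∈ Van2 n q s) : ext3 n q s T ∈ Van3 n q s := by
  refine mem_Van3.mpr fun i j k l h => ?_
  have hv : ∀ u v : Fin n, u.1 < s ∨ v.1 < s → T i u v = 0 := fun u v h => hV i u v h
  unfold ext3
  split_ifs with h1 h2 h3
  · exact hv k l (by omega)
  · exact hv j l (by omega)
  · exact hv j k (by omega)
  · rfl

lemma ext3_slice (h : s < n) : slice3 n q s (ext3 n q s T) = T := by
  rw [slice3_apply h]
  funext i k l
  simp [ext3]

lemma ext3_entry_zero (hV : T ∈ Van2 n q s) (i : Fin q) (u v w : Fin n) (hu : u.1 < s) :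
    ext3 n q s T i u v w = 0 := by
  unfold ext3
  split_ifs with h1 h2 h3
  · omega
  · exact hV i u w (Or.inl hu)
  · exact hV i u v (Or.inl hu)
  · rfl
end ext3lemmas

/-- dimension identity for the symmetric jet spaces. -/
lemma sym_dim (n q : ℕ) (hn : 0 < n) :
    finrank ℂ ↥(Sym3Sub n q) = finrank ℂ ↥(Sym2Sub n q)
      + ∑ r ∈ Finset.Icc 1 (n-1), finrank ℂ ↥(Sym2Sub n q ⊓ Van2 n q r) := by
  set K : ℕ → Submodule ℂ (Fin q → Fin n → Fin n → Fin n → ℂ) :=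
    fun s => Sym3Sub n q ⊓ Van3 n q s with hK
  set W : ℕ → Submodule ℂ (Fin q → Fin n → Fin n → ℂ) :=
    fun s => Sym2Sub n q ⊓ Van2 n q s with hW
  have hunfold : ∀ s, ∀ x, x ∈ K s ↔ x ∈ Sym3Sub n q ∧ x ∈ Van3 n q s :=
    fun s x => Submodule.mem_inf
  have hker : ∀ s < n, ∀ x ∈ K s, (slice3 n q s x = 0 ↔ x ∈ K (s+1)) := by
    intro s hs x hx
    obtain ⟨hxS, hxV⟩ := (hunfold s x).mp hx
    obtain ⟨hs1, hs2, hs3⟩ := mem_Sym3.mp hxS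
    rw [slice3_apply hs]
    constructor
    · intro h0
      have hz : ∀ k l, ∀ i, x i ⟨s, hs⟩ k l = 0 :=
        fun k l i => congrFun (congrFun (congrFun h0 i) k) l
      refine (hunfold _ x).mpr ⟨hxS, mem_Van3.mpr fun i j k l h => ?_⟩
      by_cases hj : j.1 < s
      · exact mem_Van3.mp hxV i j k l (Or.inl hj)
      · by_cases hk : k.1 < s
        · exact mem_Van3.mp hxV i j k l (Or.inr (Or.inl hk))
        · by_cases hl : l.1 < s
          · exact mem_Van3.mp hxV i j k l (Or.inr (Or.inr hl))
          · rcases h with h | h | h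
            · have e : j = ⟨s, hs⟩ := Fin.ext (show j.1 = s by omega)
              rw [e]; exact hz k l i
            · have e : k = ⟨s, hs⟩ := Fin.ext (show k.1 = s by omega)
              rw [hs1 i j k l, e]; exact hz j l i
            · have e : l = ⟨s, hs⟩ := Fin.ext (show l.1 = s by omega)
              rw [hs3 i j k l, e]; exact hz k j i
    · intro h
      obtain ⟨-, hV⟩ := (hunfold _ x).mp h
      funext i k l
      exact mem_Van3.mp hV i ⟨s, hs⟩ k l (Or.inl (Nat.lt_succ_self s))
  have hmono : ∀ s < n, K (s+1) ≤ K s := by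
    intro s _ x hx
    obtain ⟨hxS, hxV⟩ := (hunfold _ x).mp hx
    exact (hunfold _ x).mpr ⟨hxS, mem_Van3.mpr fun i j k l h =>
      mem_Van3.mp hxV i j k l (by omega)⟩
  have hbot : K n = ⊥ := by
    rw [eq_bot_iff]
    intro x hx
    obtain ⟨-, hxV⟩ := (hunfold _ x).mp hx
    have : x = 0 := funext fun i => funext fun j => funext fun k => funext fun l =>
      mem_Van3.mp hxV i j k l (Or.inl j.2)
    simp [this]
  have hmap : ∀ s < n, (K s).map (slice3 n q s) ≤ W s := by
    intro s hs y hy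
    obtain ⟨x, hx, rfl⟩ := Submodule.mem_map.mp hy
    obtain ⟨hxS, hxV⟩ := (hunfold s x).mp hx
    obtain ⟨-, hs2, -⟩ := mem_Sym3.mp hxS
    rw [slice3_apply hs]
    refine Submodule.mem_inf.mpr ⟨mem_Sym2.mpr fun i k l => hs2 i ⟨s, hs⟩ k l,
      mem_Van2.mpr fun i k l h => mem_Van3.mp hxV i ⟨s, hs⟩ k l (by omega)⟩
  have hsurj : ∀ s < n, (K s).map (slice3 n q s) = W s := by
    intro s hs
    refine le_antisymm (hmap s hs) ?_
    intro T hT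
    obtain ⟨hTsym, hTvan⟩ := Submodule.mem_inf.mp hT
    refine Submodule.mem_map.mpr ⟨ext3 n q s T, ?_, ext3_slice hs⟩
    exact (hunfold s _).mpr ⟨ext3_mem_sym3 (mem_Sym2.mp hTsym), ext3_mem_van3 hTvan⟩
  have hfm := filt_main n K W (fun s => slice3 n q s) hker hmono hbot hmap
  have hsum := hfm.2 (by intro s hs; exact hsurj s hs)
  have hk0 : K 0 = Sym3Sub n q := by rw [hK]; simp [Van3_zero]
  have hw0 : W 0 = Sym2Sub n q := by rw [hW]; simp [Van2_zero]
  rw [hk0] at hsum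
  rw [hsum, sum_split hn (fun s => finrank ℂ ↥(W s)), hw0]

section Main
variable {n α β γ : ℕ}

lemma op3_sym (a : Fin α → Fin β → Fin n → ℂ) {P : Fin β → Fin n → Fin n → Fin n → ℂ}
    (hP : P ∈ Sym3Sub n β) : op3 n α β a P ∈ Sym2Sub n α := by
  obtain ⟨hs1, -, -⟩ := mem_Sym3.mp hP
  refine mem_Sym2.mpr fun m l l' => ?_
  rw [op3_apply, op3_apply]
  exact Finset.sum_congr rfl fun i _ => Finset.sum_congr rfl fun j _ => by rw [hs1 i l l' j]

lemma comp_zero (a : Fin α → Fin β → Fin n → ℂ) (b : Fin γ → Fin α → Fin n → ℂ)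
    (H1 : LinearMap.ker (op1 n γ α b) = Submodule.map (op2 n α β a) (Sym2Sub n β))
    {P : Fin β → Fin n → Fin n → Fin n → ℂ} (hP : P ∈ Sym3Sub n β) :
    op2 n γ α b (op3 n α β a P) = 0 := by
  obtain ⟨-, hP2, -⟩ := mem_Sym3.mp hP
  funext m l
  simp only [Pi.zero_apply]
  have hS : (fun i u v => P i l u v) ∈ Sym2Sub n β := mem_Sym2.mpr fun i u v => hP2 i l u v
  have hker : op2 n α β a (fun i u v => P i l u v) ∈ LinearMap.ker (op1 n γ α b) := by
    rw [H1]; exact Submodule.mem_map_of_mem hS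
  have h0 := congrFun (LinearMap.mem_ker.mp hker) m
  rw [op1_apply] at h0
  simp only [Pi.zero_apply] at h0
  rw [op2_apply, ← h0]
  refine Finset.sum_congr rfl fun i _ => Finset.sum_congr rfl fun j _ => ?_
  rw [op3_apply, op2_apply]

lemma liftr (hn : 0 < n) (a : Fin α → Fin β → Fin n → ℂ) (b : Fin γ → Fin α → Fin n → ℂ)
    (H1 : LinearMap.ker (op1 n γ α b) = Submodule.map (op2 n α β a) (Sym2Sub n β))
    (hsurj : ∀ s < n, ∀ Q ∈ LinearMap.ker (op1 n α β a) ⊓ Van1 n β s,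
      ∃ P ∈ (Sym2Sub n β ⊓ LinearMap.ker (op2 n α β a)) ⊓ Van2 n β s,
        slice2 n β s P = Q) :
    ∀ r ≤ n, ∀ Q ∈ LinearMap.ker (op1 n γ α b) ⊓ Van1 n α r,
      ∃ P ∈ Sym2Sub n β ⊓ Van2 n β r, op2 n α β a P = Q := by
  intro r
  induction r with
  | zero =>
    intro _ Q hQ
    obtain ⟨hQk, -⟩ := Submodule.mem_inf.mp hQ
    rw [H1] at hQk
    obtain ⟨P, hP, hPQ⟩ := Submodule.mem_map.mp hQk
    exact ⟨P, Submodule.mem_inf.mpr ⟨hP, by rw [Van2_zero]; trivial⟩, hPQ⟩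
  | succ r ih =>
    intro hr1 Q hQ
    have hr : r < n := hr1
    obtain ⟨hQk, hQv⟩ := Submodule.mem_inf.mp hQ
    have hQv' : Q ∈ Van1 n α r := mem_Van1.mpr fun i j h => mem_Van1.mp hQv i j (by omega)
    obtain ⟨P, hP, hPQ⟩ := ih (by omega) Q (Submodule.mem_inf.mpr ⟨hQk, hQv'⟩)
    obtain ⟨hPsym, hPvan⟩ := Submodule.mem_inf.mp hP
    -- the slice of P at level r lies in the tableau of A an vanishes below r
    have hslice : slice2 n β r P ∈ LinearMap.ker (op1 n α β a) ⊓ Van1 n β r := by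
      rw [slice2_apply hr]
      refine Submodule.mem_inf.mpr ⟨?_, mem_Van1.mpr fun i j h =>
        mem_Van2.mp hPvan i ⟨r, hr⟩ j (Or.inr h)⟩
      rw [LinearMap.mem_ker]
      funext m
      have h1 : op2 n α β a P m ⟨r, hr⟩ = 0 := by
        rw [hPQ]
        exact mem_Van1.mp hQv m ⟨r, hr⟩ (Nat.lt_succ_self r)
      rw [op2_apply] at h1
      rw [op1_apply]
      simpa using h1
    obtain ⟨P', hP', hP'eq⟩ := hsurj r hr _ hslice
    obtain ⟨hP'A, hP'van⟩ := Submodule.mem_inf.mp hP'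
    obtain ⟨hP'sym, hP'ker⟩ := Submodule.mem_inf.mp hP'A
    refine ⟨P - P', Submodule.mem_inf.mpr ⟨Submodule.sub_mem _ hPsym hP'sym, ?_⟩, ?_⟩
    · -- vanishing up to level r+1
      have hz : ∀ i k, P i ⟨r, hr⟩ k - P' i ⟨r, hr⟩ k = 0 := by
        intro i k
        have := congrFun (congrFun hP'eq i) k
        rw [slice2_apply hr, slice2_apply hr] at this
        simp only [sub_eq_zero]
        exact this.symm
      refine mem_Van2.mpr fun i j k h => ?_
      show P i j k - P' i j k = 0
      by_cases hj : j.1 < r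
      · rw [mem_Van2.mp hPvan i j k (Or.inl hj), mem_Van2.mp hP'van i j k (Or.inl hj), sub_zero]
      · by_cases hk : k.1 < r
        · rw [mem_Van2.mp hPvan i j k (Or.inr hk), mem_Van2.mp hP'van i j k (Or.inr hk), sub_zero]
        · rcases h with h | h
          · have e : j = ⟨r, hr⟩ := Fin.ext (show j.1 = r by omega)
            rw [e]; exact hz i k
          · have e : k = ⟨r, hr⟩ := Fin.ext (show k.1 = r by omega)
            rw [mem_Sym2.mp hPsym i j k, mem_Sym2.mp hP'sym i j k, e]
            exact hz i j
    · rw [map_sub, hPQ, LinearMap.mem_ker.mp hP'ker, sub_zero]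

lemma Bsurj (hn : 0 < n) (a : Fin α → Fin β → Fin n → ℂ) (b : Fin γ → Fin α → Fin n → ℂ)
    (H1 : LinearMap.ker (op1 n γ α b) = Submodule.map (op2 n α β a) (Sym2Sub n β))
    (hsurj : ∀ s < n, ∀ Q ∈ LinearMap.ker (op1 n α β a) ⊓ Van1 n β s,
      ∃ P ∈ (Sym2Sub n β ⊓ LinearMap.ker (op2 n α β a)) ⊓ Van2 n β s,
        slice2 n β s P = Q) :
    Sym2Sub n α ⊓ LinearMap.ker (op2 n γ α b) ≤
      Submodule.map (op3 n α β a) (Sym3Sub n β) := by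
  intro Q hQ
  obtain ⟨hQsym, hQker⟩ := Submodule.mem_inf.mp hQ
  have key : ∀ s, s ≤ n → ∃ P ∈ Sym3Sub n β, Q - op3 n α β a P ∈ Van2 n α s := by
    intro s
    induction s with
    | zero =>
      exact fun _ => ⟨0, Submodule.zero_mem _, by rw [Van2_zero]; trivial⟩
    | succ s ih =>
      intro hs1
      have hs : s < n := hs1
      obtain ⟨P, hP, hR⟩ := ih (by omega)
      set R := Q - op3 n α β a P with hRdef
      have hRsym : R ∈ Sym2Sub n α :=
        Submodule.sub_mem _ hQsym (op3_sym a hP)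
      have hRker : op2 n γ α b R = 0 := by
        rw [hRdef, map_sub, LinearMap.mem_ker.mp hQker, comp_zero a b H1 hP, sub_zero]
      -- the slice of R at level s is annihilated by op1 b and vanishes below s
      have hslice : slice2 n α s R ∈ LinearMap.ker (op1 n γ α b) ⊓ Van1 n α s := by
        rw [slice2_apply hs]
        refine Submodule.mem_inf.mpr ⟨?_, mem_Van1.mpr fun i j h =>
          mem_Van2.mp hR i ⟨s, hs⟩ j (Or.inr h)⟩
        rw [LinearMap.mem_ker]
        funext m
        have h1 : op2 n γ α b R m ⟨s, hs⟩ = 0 := by rw [hRker]; rfl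
        rw [op2_apply] at h1
        rw [op1_apply]
        simpa using h1
      obtain ⟨T, hT, hTeq⟩ := liftr hn a b H1 hsurj s (by omega) _ hslice
      obtain ⟨hTsym, hTvan⟩ := Submodule.mem_inf.mp hT
      refine ⟨P + ext3 n β s T,
        Submodule.add_mem _ hP (ext3_mem_sym3 (mem_Sym2.mp hTsym)), ?_⟩
      have hDsym : Q - op3 n α β a (P + ext3 n β s T) ∈ Sym2Sub n α :=
        Submodule.sub_mem _ hQsym (op3_sym a
          (Submodule.add_mem _ hP (ext3_mem_sym3 (mem_Sym2.mp hTsym))))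
      have hsplit : Q - op3 n α β a (P + ext3 n β s T)
          = R - op3 n α β a (ext3 n β s T) := by
        rw [hRdef, map_add]; abel
      -- entries with first lower index < s+1 vanish
      have hlow : ∀ m (l l' : Fin n), l.1 < s + 1 →
          (R - op3 n α β a (ext3 n β s T)) m l l' = 0 := by
        intro m l l' hl
        show R m l l' - op3 n α β a (ext3 n β s T) m l l' = 0
        by_cases hls : l.1 < s
        · have h1 : R m l l' = 0 := mem_Van2.mp hR m l l' (Or.inl hls)
          have h2 : op3 n α β a (ext3 n β s T) m l l' = 0 := by
            rw [op3_apply]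
            refine Finset.sum_eq_zero fun i _ => Finset.sum_eq_zero fun j _ => ?_
            rw [ext3_entry_zero hTvan i l l' j hls, mul_zero]
          rw [h1, h2, sub_zero]
        · have hle : l = ⟨s, hs⟩ := Fin.ext (show l.1 = s by omega)
          have h2 : op3 n α β a (ext3 n β s T) m l l' = op2 n α β a T m l' := by
            rw [op3_apply, op2_apply]
            refine Finset.sum_congr rfl fun i _ => Finset.sum_congr rfl fun j _ => ?_
            rw [ext3_j (mem_Sym2.mp hTsym) i l l' j (by omega)]
          have h3 : op2 n α β a T m l' = R m ⟨s, hs⟩ l' := by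
            rw [hTeq, slice2_apply hs]
          rw [h2, h3, hle, sub_self]
      have hDsym' : R - op3 n α β a (ext3 n β s T) ∈ Sym2Sub n α := by
        rw [← hsplit]; exact hDsym
      rw [hsplit]
      refine mem_Van2.mpr fun m l l' h => ?_
      rcases h with h | h
      · exact hlow m l l' h
      · rw [mem_Sym2.mp hDsym' m l l']
        exact hlow m l' l h
  obtain ⟨P, hP, hzero⟩ := key n le_rfl
  refine Submodule.mem_map.mpr ⟨P, hP, ?_⟩
  have : Q - op3 n α β a P = 0 :=
    funext fun m => funext fun l => funext fun l' => mem_Van2.mp hzero m l l' (Or.inl l.2)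
  have := sub_eq_zero.mp this
  exact this.symm

end Main

/-- Proposition 4.8: involutivity is hereditary along the exact sequence
`S^β_2 → S^α_1 → S^γ_0`. If `ker ℬ = range 𝒜¹`, the tableau of `A` is in involution
(`dim A¹ = dim A⁰ + Σ_{r=1}^{n−1} dim A⁰_r`), and the corresponding identity holds for its
first prolongation, then the tableau associated to `B` is in involution:
`dim B¹ = dim B⁰ + Σ_{r=1}^{n−1} dim B⁰_r`. -/
theorem torsion_tableau_involutive (n α β γ : ℕ) (hn : 0 < n) (hα : 0 < α) (hβ : 0 < β)
    (hγ : 0 < γ) (a : Fin α → Fin β → Fin n → ℂ) (b : Fin γ → Fin α → Fin n → ℂ)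
    (H1 : LinearMap.ker (op1 n γ α b) = Submodule.map (op2 n α β a) (Sym2Sub n β))
    (H2 : Module.finrank ℂ ↥(Sym2Sub n β ⊓ LinearMap.ker (op2 n α β a)) =
      Module.finrank ℂ ↥(LinearMap.ker (op1 n α β a)) +
        ∑ r ∈ Finset.Icc 1 (n - 1),
          Module.finrank ℂ ↥(LinearMap.ker (op1 n α β a) ⊓ Van1 n β r))
    (H2' : Module.finrank ℂ ↥(Sym3Sub n β ⊓ LinearMap.ker (op3 n α β a)) =
      Module.finrank ℂ ↥(Sym2Sub n β ⊓ LinearMap.ker (op2 n α β a)) +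
        ∑ r ∈ Finset.Icc 1 (n - 1),
          Module.finrank ℂ
            ↥(Sym2Sub n β ⊓ LinearMap.ker (op2 n α β a) ⊓ Van2 n β r)) :
    Module.finrank ℂ ↥(Sym2Sub n α ⊓ LinearMap.ker (op2 n γ α b)) =
      Module.finrank ℂ ↥(LinearMap.ker (op1 n γ α b)) +
        ∑ r ∈ Finset.Icc 1 (n - 1),
          Module.finrank ℂ ↥(LinearMap.ker (op1 n γ α b) ⊓ Van1 n α r) := by
  have hsA := surjA n α β hn a H2
  have hlift := liftr hn a b H1 hsA
  have hB1map : Submodule.map (op3 n α β a) (Sym3Sub n β)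
      = Sym2Sub n α ⊓ LinearMap.ker (op2 n γ α b) := by
    refine le_antisymm ?_ (Bsurj hn a b H1 hsA)
    intro Q hQ
    obtain ⟨P, hP, rfl⟩ := Submodule.mem_map.mp hQ
    exact Submodule.mem_inf.mpr ⟨op3_sym a hP, LinearMap.mem_ker.mpr (comp_zero a b H1 hP)⟩
  have h1 := rank_split (Sym3Sub n β) (op3 n α β a)
  rw [hB1map] at h1
  have h2 := rank_split (Sym2Sub n β) (op2 n α β a)
  rw [← H1] at h2
  have h3 : ∀ r ∈ Finset.Icc 1 (n-1),
      finrank ℂ ↥(Sym2Sub n β ⊓ Van2 n β r)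
        = finrank ℂ ↥(LinearMap.ker (op1 n γ α b) ⊓ Van1 n α r)
          + finrank ℂ ↥(Sym2Sub n β ⊓ LinearMap.ker (op2 n α β a) ⊓ Van2 n β r) := by
    intro r hr
    obtain ⟨hr1, hr2⟩ := Finset.mem_Icc.mp hr
    have h := rank_split (Sym2Sub n β ⊓ Van2 n β r) (op2 n α β a)
    have hmapeq : Submodule.map (op2 n α β a) (Sym2Sub n β ⊓ Van2 n β r)
        = LinearMap.ker (op1 n γ α b) ⊓ Van1 n α r := by
      apply le_antisymm
      · intro Q hQ
        obtain ⟨P, hP, rfl⟩ := Submodule.mem_map.mp hQ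
        obtain ⟨hPs, hPv⟩ := Submodule.mem_inf.mp hP
        refine Submodule.mem_inf.mpr ⟨?_, mem_Van1.mpr fun m l hl => ?_⟩
        · rw [H1]; exact Submodule.mem_map_of_mem hPs
        · rw [op2_apply]
          exact Finset.sum_eq_zero fun i _ => Finset.sum_eq_zero fun j _ => by
            rw [mem_Van2.mp hPv i l j (Or.inl hl), mul_zero]
      · intro Q hQ
        obtain ⟨P, hP, hPQ⟩ := hlift r (by omega) Q hQ
        exact Submodule.mem_map.mpr ⟨P, hP, hPQ⟩
    have hinf : (Sym2Sub n β ⊓ Van2 n β r) ⊓ LinearMap.ker (op2 n α β a)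
        = Sym2Sub n β ⊓ LinearMap.ker (op2 n α β a) ⊓ Van2 n β r := inf_right_comm _ _ _
    rw [hmapeq, hinf] at h
    exact h
  have h3' : ∑ r ∈ Finset.Icc 1 (n-1), finrank ℂ ↥(Sym2Sub n β ⊓ Van2 n β r)
      = ∑ r ∈ Finset.Icc 1 (n-1), finrank ℂ ↥(LinearMap.ker (op1 n γ α b) ⊓ Van1 n α r)
        + ∑ r ∈ Finset.Icc 1 (n-1),
            finrank ℂ ↥(Sym2Sub n β ⊓ LinearMap.ker (op2 n α β a) ⊓ Van2 n β r) := by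
    rw [← Finset.sum_add_distrib]
    exact Finset.sum_congr rfl h3
  have h4 := sym_dim n β hn
  omega


end
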